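/- arXiv:0804.0188 — 2 statements merged into one kernel-verified Lean document; each statement's English description precedes it below -/
import Mathlib

section
/- Given $K_0 \in S^n$, $\alpha \in \mathbb{R}^n$, $Y = \mathrm{diag}(y)$ for a label vector $y \in \mathbb{R}^n$, and $\rho > 0$, the unique minimizer over $K \succeq 0$ of $f(K) = \alpha^T e - \tfrac12 \mathrm{Tr}(K (Y\alpha)(Y\alpha)^T) + \rho \|K - K_0\|_F^2$ is $K^* = (K_0 + (Y\alpha)(Y\alpha)^T/(4\rho))_+$, the projection of $K_0 + (Y\alpha)(Y\alpha)^T/(4\rho)$ onto the positive semidefinite cone. -/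
open Matrix

noncomputable def frob2 {n : ℕ} (M : Matrix (Fin n) (Fin n) ℝ) : ℝ :=
  Matrix.trace (Mᵀ * M)

/-- `P` is the projection of `M` onto the PSD cone in Frobenius norm. -/
def IsPSDProj {n : ℕ} (M P : Matrix (Fin n) (Fin n) ℝ) : Prop :=
  P.PosSemidef ∧ ∀ K : Matrix (Fin n) (Fin n) ℝ, K.PosSemidef →
    frob2 (P - M) ≤ frob2 (K - M)

/-!
Completing the square, `f K = ρ ‖K - M‖_F² + c` with `M = K₀ + (Yα)(Yα)ᵀ/(4ρ)` and `c` independent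
of `K`, so minimising `f` over the PSD cone is projecting `M` onto it. Uniqueness is strict
convexity of `‖· - M‖_F²`: the midpoint of two projections is PSD and, by the parallelogram law,
strictly closer to `M` unless they coincide.
-/

section Trace

variable {m k R : Type*} [Fintype m] [Fintype k] [CommSemiring R]

lemma trace_transpose_mul_comm (A B : Matrix m k R) : trace (Bᵀ * A) = trace (Aᵀ * B) := by
  rw [← trace_transpose, transpose_mul, transpose_transpose]

lemma trace_transpose_mul_of_transpose_eq (K : Matrix m m R) {W : Matrix m m R} (hW : Wᵀ = W) :
    trace (Kᵀ * W) = trace (K * W) := by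
  simpa only [hW] using trace_transpose_mul K W

end Trace

variable {n : ℕ}

lemma frob2_nonneg (A : Matrix (Fin n) (Fin n) ℝ) : 0 ≤ frob2 A := by
  simpa [frob2] using (posSemidef_conjTranspose_mul_self A).trace_nonneg

lemma frob2_eq_zero_iff {A : Matrix (Fin n) (Fin n) ℝ} : frob2 A = 0 ↔ A = 0 := by
  simpa [frob2] using trace_conjTranspose_mul_self_eq_zero_iff (A := A)

lemma frob2_add (A B : Matrix (Fin n) (Fin n) ℝ) :
    frob2 (A + B) = frob2 A + 2 * trace (Aᵀ * B) + frob2 B := by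
  simp only [frob2, transpose_add, add_mul, mul_add, trace_add, trace_transpose_mul_comm A B]
  ring

lemma frob2_smul (c : ℝ) (A : Matrix (Fin n) (Fin n) ℝ) : frob2 (c • A) = c ^ 2 * frob2 A := by
  simp only [frob2, transpose_smul, smul_mul_smul, trace_smul, smul_eq_mul, sq]

lemma frob2_sub (A B : Matrix (Fin n) (Fin n) ℝ) :
    frob2 (A - B) = frob2 A - 2 * trace (Aᵀ * B) + frob2 B := by
  have hneg : frob2 (-B) = frob2 B := by simpa using frob2_smul (-1) B
  rw [sub_eq_add_neg, frob2_add, hneg, Matrix.mul_neg, trace_neg, mul_neg]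
  ring

lemma frob2_midpoint_sub (A B M : Matrix (Fin n) (Fin n) ℝ) :
    frob2 ((1 / 2 : ℝ) • (A + B) - M) =
      (frob2 (A - M) + frob2 (B - M)) / 2 - frob2 (A - B) / 4 := by
  have hmid : (1 / 2 : ℝ) • (A + B) - M = (1 / 2 : ℝ) • ((A - M) + (B - M)) := by module
  have hdiff : A - B = (A - M) - (B - M) := by abel
  rw [hmid, hdiff, frob2_smul, frob2_add (A - M), frob2_sub (A - M)]
  ring

lemma IsPSDProj.eq_of_frob2_sub_eq {M P K : Matrix (Fin n) (Fin n) ℝ} (hP : IsPSDProj M P)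
    (hK : K.PosSemidef) (h : frob2 (K - M) = frob2 (P - M)) : K = P := by
  have hmid : ((1 / 2 : ℝ) • (K + P)).PosSemidef := (hK.add hP.1).smul (by norm_num)
  have hle := hP.2 _ hmid
  rw [frob2_midpoint_sub, h] at hle
  have hzero : frob2 (K - P) = 0 := le_antisymm (by linarith) (frob2_nonneg _)
  exact sub_eq_zero.mp (frob2_eq_zero_iff.mp hzero)

lemma mul_frob2_sub_sub_trace_mul {ρ : ℝ} (hρ : ρ ≠ 0) (K K₀ : Matrix (Fin n) (Fin n) ℝ)
    {W : Matrix (Fin n) (Fin n) ℝ} (hW : Wᵀ = W) :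
    ρ * frob2 (K - K₀) - (1 / 2) * trace (K * W) =
      ρ * frob2 (K - (K₀ + (1 / (4 * ρ)) • W))
        - (1 / 2) * trace (K₀ * W) - frob2 W / (16 * ρ) := by
  have hsplit : K - (K₀ + (1 / (4 * ρ)) • W) = (K - K₀) - (1 / (4 * ρ)) • W := by abel
  rw [hsplit, frob2_sub (K - K₀), frob2_smul, Matrix.mul_smul, trace_smul, transpose_sub, sub_mul,
    trace_sub, trace_transpose_mul_of_transpose_eq K hW, trace_transpose_mul_of_transpose_eq K₀ hW,
    smul_eq_mul]
  field_simp
  ring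

theorem inner_kernel_learning_solution_general {n : ℕ}
    (K₀ Kstar : Matrix (Fin n) (Fin n) ℝ) (α : Fin n → ℝ) (ρ : ℝ)
    (hρ : 0 < ρ)
    (v : Fin n → ℝ)
    (f : Matrix (Fin n) (Fin n) ℝ → ℝ)
    (hf : ∀ K, f K = (∑ i, α i) - (1/2) * Matrix.trace (K * Matrix.vecMulVec v v)
        + ρ * frob2 (K - K₀))
    (hproj : IsPSDProj (K₀ + (1/(4*ρ)) • Matrix.vecMulVec v v) Kstar) :
    Kstar.PosSemidef ∧
    (∀ K : Matrix (Fin n) (Fin n) ℝ, K.PosSemidef → f Kstar ≤ f K) ∧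
    (∀ K : Matrix (Fin n) (Fin n) ℝ, K.PosSemidef → f K = f Kstar → K = Kstar) := by
  set W := vecMulVec v v
  set M := K₀ + (1 / (4 * ρ)) • W
  have hf_sq : ∀ K, f K = ρ * frob2 (K - M)
      + ((∑ i, α i) - (1 / 2) * trace (K₀ * W) - frob2 W / (16 * ρ)) := by
    intro K
    have hsq := mul_frob2_sub_sub_trace_mul hρ.ne' K K₀ (transpose_vecMulVec v v)
    rw [hf]
    linarith
  refine ⟨hproj.1, fun K hK => ?_, fun K hK hfK => hproj.eq_of_frob2_sub_eq hK ?_⟩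
  · rw [hf_sq, hf_sq]
    gcongr
    exact hproj.2 K hK
  · rw [hf_sq, hf_sq] at hfK
    exact mul_left_cancel₀ hρ.ne' (by linarith)

/-- the unique minimizer over `K ⪰ 0` of
`f(K) = αᵀe - ½ Tr(K (Yα)(Yα)ᵀ) + ρ ‖K - K₀‖_F²` is the PSD projection of
`K₀ + (Yα)(Yα)ᵀ/(4ρ)`. -/
theorem inner_kernel_learning_solution {n : ℕ}
    (K₀ Kstar : Matrix (Fin n) (Fin n) ℝ) (α y : Fin n → ℝ) (ρ : ℝ)
    (hK₀ : K₀.IsSymm) (hρ : 0 < ρ)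
    (v : Fin n → ℝ) (hv : v = (Matrix.diagonal y) *ᵥ α)
    (f : Matrix (Fin n) (Fin n) ℝ → ℝ)
    (hf : ∀ K, f K = (∑ i, α i) - (1/2) * Matrix.trace (K * Matrix.vecMulVec v v)
        + ρ * frob2 (K - K₀))
    (hproj : IsPSDProj (K₀ + (1/(4*ρ)) • Matrix.vecMulVec v v) Kstar) :
    Kstar.PosSemidef ∧
    (∀ K : Matrix (Fin n) (Fin n) ℝ, K.PosSemidef → f Kstar ≤ f K) ∧
    (∀ K : Matrix (Fin n) (Fin n) ℝ, K.PosSemidef → f K = f Kstar → K = Kstar) :=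
  inner_kernel_learning_solution_general K₀ Kstar α ρ hρ v f hf hproj
end

section
/- If $K_0 \succeq 0$, then the value of the penalized inner minimum satisfies $\min_{K \succeq 0}\left(\alpha^T e - \tfrac12 \mathrm{Tr}(K(Y\alpha)(Y\alpha)^T) + \rho\|K-K_0\|_F^2\right) = \alpha^T e - \tfrac12 \mathrm{Tr}(K_0 (Y\alpha)(Y\alpha)^T) - \tfrac{1}{16\rho}\sum_{i,j} (\alpha_i \alpha_j)^2$ for all $\alpha \in \mathbb{R}^n$ and $\rho > 0$. -/
open Matrix

/-!
With `M = (Yα)(Yα)ᵀ`, completing the square in the Frobenius norm gives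
`-½ Tr(KM) + ρ‖K - K₀‖² = -½ Tr(K₀M) - ‖M‖²/(16ρ) + ρ‖K - (K₀ + M/(4ρ))‖²`,
so the infimum is attained at `K₀ + M/(4ρ)`, which is positive semidefinite because `K₀` and `M`
are. Finally `‖M‖² = ∑ᵢⱼ (αᵢαⱼ)²` since `yᵢ² = 1`.
-/

section

variable {n : ℕ}

lemma frob2_eq_sum_sq (A : Matrix (Fin n) (Fin n) ℝ) : frob2 A = ∑ i, ∑ j, A i j ^ 2 := by
  simp only [frob2, trace, diag, mul_apply, transpose_apply, sq]
  exact Finset.sum_comm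

lemma trace_mul_eq_sum_of_isSymm {ι : Type*} [Fintype ι] {M : Matrix ι ι ℝ} (hM : M.IsSymm)
    (A : Matrix ι ι ℝ) : trace (A * M) = ∑ i, ∑ j, A i j * M i j := by
  simp only [trace, diag, mul_apply]
  exact Finset.sum_congr rfl fun i _ => Finset.sum_congr rfl fun j _ => by rw [hM.apply j i]

lemma frob2_penalty_complete_square {M : Matrix (Fin n) (Fin n) ℝ} (hM : M.IsSymm) {ρ : ℝ}
    (hρ : ρ ≠ 0) (K K₀ : Matrix (Fin n) (Fin n) ℝ) :
    -(1/2) * trace (K * M) + ρ * frob2 (K - K₀)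
      = -(1/2) * trace (K₀ * M) - 1/(16*ρ) * frob2 M
        + ρ * frob2 (K - (K₀ + (1/(4*ρ)) • M)) := by
  simp only [frob2_eq_sum_sq, trace_mul_eq_sum_of_isSymm hM, Matrix.sub_apply, Matrix.add_apply,
    Matrix.smul_apply, smul_eq_mul, Finset.mul_sum, ← Finset.sum_add_distrib, ← Finset.sum_sub_distrib]
  refine Finset.sum_congr rfl fun i _ => Finset.sum_congr rfl fun j _ => ?_
  field_simp
  ring

lemma isLeast_penalized_objective (c : ℝ) {M K₀ : Matrix (Fin n) (Fin n) ℝ}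
    (hM : M.PosSemidef) (hK₀ : K₀.PosSemidef) {ρ : ℝ} (hρ : 0 < ρ) :
    IsLeast { t : ℝ | ∃ K : Matrix (Fin n) (Fin n) ℝ, K.PosSemidef ∧
        t = c - (1/2) * trace (K * M) + ρ * frob2 (K - K₀) }
      (c - (1/2) * trace (K₀ * M) - 1/(16*ρ) * frob2 M) := by
  have hsq := frob2_penalty_complete_square (isHermitian_iff_isSymm.mp hM.isHermitian) hρ.ne'
  refine ⟨⟨K₀ + (1/(4*ρ)) • M, hK₀.add (hM.smul (by positivity)), ?_⟩, ?_⟩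
  · have hmin := hsq (K₀ + (1/(4*ρ)) • M) K₀
    rw [sub_self, show frob2 (0 : Matrix (Fin n) (Fin n) ℝ) = 0 by simp [frob2]] at hmin
    linarith
  · rintro t ⟨K, -, rfl⟩
    have hnn : 0 ≤ ρ * frob2 (K - (K₀ + (1/(4*ρ)) • M)) := by
      rw [frob2_eq_sum_sq]; positivity
    linarith [hsq K K₀]

lemma frob2_vecMulVec_diagonal_mulVec {y : Fin n → ℝ} (hy : ∀ i, y i ^ 2 = 1) (α : Fin n → ℝ) :
    frob2 (vecMulVec (diagonal y *ᵥ α) (diagonal y *ᵥ α)) = ∑ i, ∑ j, (α i * α j) ^ 2 := by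
  simp only [frob2_eq_sum_sq, vecMulVec_apply, mulVec_diagonal]
  refine Finset.sum_congr rfl fun i _ => Finset.sum_congr rfl fun j _ => ?_
  linear_combination (α i * α j) ^ 2 * ((y j ^ 2) * (hy i) + hy j)

end

/-- for PSD `K₀`, the penalized inner minimum has the explicit
value `αᵀe - ½Tr(K₀(Yα)(Yα)ᵀ) - (1/16ρ) ∑_{i,j} (αᵢαⱼ)²`. -/
theorem inner_min_value_psd {n : ℕ}
    (K₀ : Matrix (Fin n) (Fin n) ℝ) (α y : Fin n → ℝ) (ρ : ℝ)
    (hK₀ : K₀.PosSemidef) (hy : ∀ i, y i = 1 ∨ y i = -1) (hρ : 0 < ρ)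
    (v : Fin n → ℝ) (hv : v = (Matrix.diagonal y) *ᵥ α) :
    sInf { t : ℝ | ∃ K : Matrix (Fin n) (Fin n) ℝ, K.PosSemidef ∧
      t = (∑ i, α i) - (1/2) * Matrix.trace (K * Matrix.vecMulVec v v)
        + ρ * frob2 (K - K₀) }
    = (∑ i, α i) - (1/2) * Matrix.trace (K₀ * Matrix.vecMulVec v v)
        - (1/(16*ρ)) * ∑ i, ∑ j, (α i * α j)^2 := by
  have hy_sq : ∀ i, y i ^ 2 = 1 := fun i => by rcases hy i with h | h <;> simp [h]
  have hM : (vecMulVec v v).PosSemidef := by simpa using posSemidef_vecMulVec_self_star v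
  rw [(isLeast_penalized_objective _ hM hK₀ hρ).csInf_eq, hv, frob2_vecMulVec_diagonal_mulVec hy_sq]
end
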